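/- arXiv:2111.01579 — 4 statements merged into one kernel-verified Lean document; each statement's English description precedes it below -/
import Mathlib

section
/- For every x ∈ 2 + 4ℤ₂ one has |f(x)|₂ = 4·|x|₂ = 2 > 1; consequently |f^[n](x)|₂ → ∞ as n → ∞, i.e. the disk 2 + 4ℤ₂ is contained in the attracting basin of ∞. -/
/-!
Since `‖9/4‖ = 4`, the norm of `f x = (9/4)·x·(x - 1)²` is `4·‖x‖·‖x - 1‖²`. On `2 + 4ℤ₂` the
ultrametric inequality gives `‖x‖ = ‖2‖ = 1/2` and `‖x - 1‖ = ‖1‖ = 1`, so `‖f x‖ = 2`. Once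
`‖y‖ > 1` we have `‖y - 1‖ = ‖y‖`, hence `‖f y‖ = 4‖y‖³ ≥ 4‖y‖`: the norm grows geometrically
along the orbit of `f x`.
-/

open Function Filter

/-- The cubic polynomial `f(x) = (9/4)·x·(x−1)²` acting on `ℚ₂`. -/
noncomputable def f : ℚ_[2] → ℚ_[2] := fun x => (9 / 4 : ℚ_[2]) * x * (x - 1) ^ 2

theorem tendsto_comp_iterate_atTop_of_expanding {α : Type*} (g : α → α) (N : α → ℝ) {r c : ℝ}
    (hr : 0 < r) (hc : 1 < c) (hg : ∀ y, r ≤ N y → c * N y ≤ N (g y)) {x : α} (hx : r ≤ N x) :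
    Tendsto (fun n => N (g^[n] x)) atTop atTop := by
  have hNx : 0 < N x := hr.trans_le hx
  have hbound : ∀ n : ℕ, c ^ n * N x ≤ N (g^[n] x) := by
    intro n
    induction n with
    | zero => simp
    | succ n ih =>
      have hr_le : r ≤ N (g^[n] x) :=
        hx.trans ((le_mul_of_one_le_left hNx.le (one_le_pow₀ hc.le)).trans ih)
      calc c ^ (n + 1) * N x = c * (c ^ n * N x) := by ring
        _ ≤ c * N (g^[n] x) := by gcongr
        _ ≤ N (g^[n + 1] x) := by rw [iterate_succ_apply']; exact hg _ hr_le
  exact tendsto_atTop_mono hbound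
    ((tendsto_pow_atTop_atTop_of_one_lt hc).atTop_mul_const hNx)

lemma Padic.norm_two_eq_half : ‖(2 : ℚ_[2])‖ = 1 / 2 := by
  simpa using Padic.norm_p (p := 2)

lemma norm_nine_div_four : ‖(9 / 4 : ℚ_[2])‖ = 4 := by
  have h9 : ‖((9 : ℕ) : ℚ_[2])‖ = 1 := Padic.norm_natCast_eq_one_iff.mpr (by decide)
  have h4 : (4 : ℚ_[2]) = 2 ^ 2 := by norm_num
  rw [norm_div, h4, norm_pow, Padic.norm_two_eq_half]
  push_cast at h9
  rw [h9]
  norm_num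

lemma norm_f (y : ℚ_[2]) : ‖f y‖ = 4 * ‖y‖ * ‖y - 1‖ ^ 2 := by
  rw [f, norm_mul, norm_mul, norm_pow, norm_nine_div_four]

lemma norm_f_of_one_lt_norm {y : ℚ_[2]} (hy : 1 < ‖y‖) : ‖f y‖ = 4 * ‖y‖ ^ 3 := by
  have hy1 : ‖y - 1‖ = ‖y‖ := Padic.norm_eq_of_norm_sub_lt_right (by simpa using hy)
  rw [norm_f, hy1]
  ring

/-- For every `x ∈ 2 + 4ℤ₂` one has `|f(x)|₂ = 4·|x|₂ = 2 > 1`; consequently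
`|fⁿ(x)|₂ → ∞`, i.e. the disk `2 + 4ℤ₂` is contained in the attracting basin of `∞`. -/
theorem stmt1 (x : ℚ_[2]) (hx : ‖x - 2‖ ≤ (1 / 2 : ℝ) ^ 2) :
    ‖f x‖ = 4 * ‖x‖ ∧ ‖f x‖ = 2 ∧ (1 : ℝ) < ‖f x‖ ∧
      Tendsto (fun n : ℕ => ‖f^[n] x‖) atTop atTop := by
  have hx_norm : ‖x‖ = 1 / 2 := by
    rw [← Padic.norm_two_eq_half]
    exact Padic.norm_eq_of_norm_sub_lt_right (by rw [Padic.norm_two_eq_half]; linarith)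
  have hx_sub_one : ‖x - 1‖ = 1 := by
    rw [← norm_one (α := ℚ_[2])]
    refine Padic.norm_eq_of_norm_sub_lt_right ?_
    rw [show x - 1 - 1 = x - 2 by ring, norm_one]
    linarith
  have hfx : ‖f x‖ = 2 := by
    rw [norm_f, hx_norm, hx_sub_one]
    norm_num
  refine ⟨by rw [hfx, hx_norm]; norm_num, hfx, by rw [hfx]; norm_num, ?_⟩
  have hexpand : ∀ y : ℚ_[2], 2 ≤ ‖y‖ → 4 * ‖y‖ ≤ ‖f y‖ := fun y hy => by
    rw [norm_f_of_one_lt_norm (by linarith)]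
    nlinarith [mul_le_mul hy hy zero_le_two (by linarith)]
  refine (tendsto_add_atTop_iff_nat 1).mp ?_
  simpa only [iterate_succ_apply] using
    tendsto_comp_iterate_atTop_of_expanding f norm two_pos (by norm_num) hexpand hfx.ge
end

section
/- For every x ∈ 1 + 2 + 4ℤ₂ one has f(x) ∈ 1 + 2 + 4ℤ₂ and |f(x) − 1/3|₂ ≤ |x − 1/3|₂; consequently |f^[n](x) − 1/3|₂ ≤ |x − 1/3|₂ for all n ≥ 0. (This is the key step showing 1 + 2 + 4ℤ₂ lies in the Fatou component of the fixed point 1/3.) -/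
open Function Filter

theorem norm3 : ‖(3:ℚ_[2])‖ = 1 := by
  have h := Padic.norm_intCast_lt_one_iff (p:=2) (k:=3)
  have h2 : ‖((3:ℤ):ℚ_[2])‖ ≤ 1 := Padic.norm_int_le_one 3
  push_cast at h h2
  norm_num at h
  exact le_antisymm h2 h

theorem norm9 : ‖(9:ℚ_[2])‖ = 1 := by
  have h := Padic.norm_intCast_lt_one_iff (p:=2) (k:=9)
  have h2 : ‖((9:ℤ):ℚ_[2])‖ ≤ 1 := Padic.norm_int_le_one 9
  push_cast at h h2
  norm_num at h
  exact le_antisymm h2 h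

theorem norm2' : ‖(2:ℚ_[2])‖ = 1/2 := by
  have := Padic.norm_p (p:=2)
  push_cast at this; rw [this]; norm_num

theorem norm94 : ‖(9/4:ℚ_[2])‖ = 4 := by
  have h4 : (4:ℚ_[2]) = 2^2 := by norm_num
  rw [norm_div, norm9, h4, norm_pow, norm2']; norm_num

theorem norm83 : ‖(8/3:ℚ_[2])‖ = 1/8 := by
  have h8 : (8:ℚ_[2]) = 2^3 := by norm_num
  rw [norm_div, h8, norm_pow, norm2', norm3]; norm_num

theorem key (x : ℚ_[2]) (hx : ‖x - (1 + 2)‖ ≤ (1 / 2 : ℝ) ^ 2) :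
    ‖f x - (1 + 2)‖ ≤ (1 / 2 : ℝ) ^ 2 ∧ ‖f x - 1 / 3‖ ≤ ‖x - 1 / 3‖ := by
  have h13 : ‖x - 1/3‖ ≤ 1/4 := by
    have e : x - 1/3 = (x - (1+2)) + 8/3 := by ring
    rw [e]
    refine le_trans (Padic.nonarchimedean _ _) ?_
    rw [norm83]
    refine max_le ?_ (by norm_num)
    linarith [hx]
  have h43 : ‖x - 4/3‖ ≤ 1 := by
    have e : x - 4/3 = (x - 1/3) + (-1) := by ring
    rw [e]
    refine le_trans (Padic.nonarchimedean _ _) ?_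
    rw [norm_neg, norm_one]
    exact max_le (le_trans h13 (by norm_num)) le_rfl
  have efx : f x - 1/3 = (9/4 : ℚ_[2]) * (x - 1/3)^2 * (x - 4/3) := by
    simp only [f]; ring
  have hfx : ‖f x - 1/3‖ ≤ ‖x - 1/3‖ := by
    rw [efx, norm_mul, norm_mul, norm94, norm_pow, sq]
    calc 4 * (‖x - 1/3‖ * ‖x - 1/3‖) * ‖x - 4/3‖
        ≤ 4 * ((1/4) * ‖x - 1/3‖) * 1 := by
          have h0 : (0:ℝ) ≤ ‖x - 1/3‖ := norm_nonneg _
          nlinarith [norm_nonneg (x - 4/3)]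
      _ = ‖x - 1/3‖ := by ring
  refine ⟨?_, hfx⟩
  have e : f x - (1+2) = (f x - 1/3) + (-(8/3)) := by ring
  rw [e]
  refine le_trans (Padic.nonarchimedean _ _) ?_
  rw [norm_neg, norm83]
  refine max_le (le_trans hfx ?_) (by norm_num)
  linarith [h13]

/-- For every `x ∈ 1 + 2 + 4ℤ₂` one has `f(x) ∈ 1 + 2 + 4ℤ₂` and
`|f(x) − 1/3|₂ ≤ |x − 1/3|₂`; consequently `|fⁿ(x) − 1/3|₂ ≤ |x − 1/3|₂` for all `n ≥ 0`. -/
theorem stmt2 (x : ℚ_[2]) (hx : ‖x - (1 + 2)‖ ≤ (1 / 2 : ℝ) ^ 2) :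
    ‖f x - (1 + 2)‖ ≤ (1 / 2 : ℝ) ^ 2 ∧
      ‖f x - 1 / 3‖ ≤ ‖x - 1 / 3‖ ∧
      ∀ n : ℕ, ‖f^[n] x - 1 / 3‖ ≤ ‖x - 1 / 3‖ := by
  obtain ⟨h1, h2⟩ := key x hx
  refine ⟨h1, h2, ?_⟩
  have main : ∀ n : ℕ, ‖f^[n] x - (1 + 2)‖ ≤ (1 / 2 : ℝ) ^ 2 ∧
      ‖f^[n] x - 1/3‖ ≤ ‖x - 1/3‖ := by
    intro n
    induction n with
    | zero => exact ⟨hx, by simp⟩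
    | succ n ih =>
      obtain ⟨ih1, ih2⟩ := ih
      obtain ⟨k1, k2⟩ := key _ ih1
      rw [iterate_succ_apply']
      exact ⟨k1, le_trans k2 ih2⟩
  exact fun n => (main n).2
end

section
/- The map f is scaling on 4ℤ₂ with scaling ratio 4: for all x, y ∈ 4ℤ₂ one has |f(x) − f(y)|₂ = 4·|x − y|₂. -/
open Function

/-- `f` is scaling on `4ℤ₂` with scaling ratio `4`:
for all `x, y ∈ 4ℤ₂` one has `|f(x) − f(y)|₂ = 4·|x − y|₂`. -/
theorem stmt3 (x y : ℚ_[2]) (hx : ‖x‖ ≤ (1 / 2 : ℝ) ^ 2) (hy : ‖y‖ ≤ (1 / 2 : ℝ) ^ 2) :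
    ‖f x - f y‖ = 4 * ‖x - y‖ := by
  have h2 : ‖(2 : ℚ_[2])‖ = 1 / 2 := by
    have := Padic.norm_p (p := 2); simpa using this
  have hx' : ‖x‖ ≤ (1/4 : ℝ) := le_trans hx (le_of_eq (by norm_num))
  have hy' : ‖y‖ ≤ (1/4 : ℝ) := le_trans hy (le_of_eq (by norm_num))
  have key : f x - f y
      = (9 / 4 : ℚ_[2]) * (x - y) * (x ^ 2 + x * y + y ^ 2 - 2 * x - 2 * y + 1) := by
    unfold f; ring
  have h94 : ‖(9 / 4 : ℚ_[2])‖ = 4 := by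
    have hc : ((9 / 4 : ℚ) : ℚ_[2]) = (9 / 4 : ℚ_[2]) := by push_cast; ring
    rw [← hc, Padic.eq_padicNorm]
    have h9 : padicNorm 2 9 = 1 := by
      have : ((9 : ℕ) : ℚ) = (9 : ℚ) := by norm_num
      rw [← this, padicNorm.nat_eq_one_iff]; norm_num
    have hp2 : padicNorm 2 2 = 2⁻¹ := by
      have := padicNorm.padicNorm_p (p := 2) (by norm_num)
      simpa using this
    have h4 : padicNorm 2 4 = 1 / 4 := by
      have e : (4 : ℚ) = 2 * 2 := by norm_num
      rw [e, padicNorm.mul, hp2]; norm_num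
    rw [padicNorm.div, h9, h4]; norm_num
  have H : ∀ a b : ℚ_[2], ‖a‖ ≤ (1/2:ℝ) → ‖b‖ ≤ (1/2:ℝ) → ‖a + b‖ ≤ (1/2:ℝ) :=
    fun a b ha hb => le_trans (Padic.nonarchimedean a b) (max_le ha hb)
  have hx2 : ‖x ^ 2‖ ≤ (1/2:ℝ) := by
    rw [norm_pow]
    nlinarith [norm_nonneg x]
  have hxy : ‖x * y‖ ≤ (1/2:ℝ) := by
    rw [norm_mul]
    nlinarith [norm_nonneg x, norm_nonneg y]
  have hy2 : ‖y ^ 2‖ ≤ (1/2:ℝ) := by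
    rw [norm_pow]
    nlinarith [norm_nonneg y]
  have h2x : ‖-(2 * x)‖ ≤ (1/2:ℝ) := by
    rw [norm_neg, norm_mul, h2]
    nlinarith [norm_nonneg x]
  have h2y : ‖-(2 * y)‖ ≤ (1/2:ℝ) := by
    rw [norm_neg, norm_mul, h2]
    nlinarith [norm_nonneg y]
  have hsmall : ‖x ^ 2 + x * y + y ^ 2 - 2 * x - 2 * y‖ ≤ (1/2:ℝ) := by
    have e : x ^ 2 + x * y + y ^ 2 - 2 * x - 2 * y
        = x ^ 2 + (x * y + (y ^ 2 + (-(2 * x) + -(2 * y)))) := by ring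
    rw [e]
    exact H _ _ hx2 (H _ _ hxy (H _ _ hy2 (H _ _ h2x h2y)))
  have hg : ‖x ^ 2 + x * y + y ^ 2 - 2 * x - 2 * y + 1‖ = 1 := by
    have hne : ‖x ^ 2 + x * y + y ^ 2 - 2 * x - 2 * y‖ ≠ ‖(1 : ℚ_[2])‖ := by
      rw [norm_one]; linarith
    rw [Padic.add_eq_max_of_ne hne, norm_one]
    rw [max_eq_right (by linarith)]
  rw [key, norm_mul, norm_mul, h94, hg, mul_one]
end

section
/- The image of the disk 2² + 2⁵ℤ₂ under f equals the disk 1 + 2³ℤ₂, and this image decomposes as f(2² + 2⁵ℤ₂) = {1} ∪ ⋃_{m≥2} [ (1 + 2^{m+1} + 2^{m+3}ℤ₂) ∪ (1 + 2^{m+1} + 2^{m+2} + 2^{m+3}ℤ₂) ]. -/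
open Function Set

open Polynomial


lemma odd_int (z : ℤ_[2]) (h : ¬ ‖z‖ < 1) : ‖z - 1‖ < 1 := by
  rw [PadicInt.norm_lt_one_iff_dvd] at h ⊢
  have hz : PadicInt.toZMod z ≠ 0 := by
    intro h0
    apply h
    have : z ∈ RingHom.ker (PadicInt.toZMod (p := 2)) := h0
    rw [PadicInt.ker_toZMod, PadicInt.maximalIdeal_eq_span_p, Ideal.mem_span_singleton] at this
    exact_mod_cast this
  have h1 : PadicInt.toZMod z = 1 := by
    revert hz; generalize PadicInt.toZMod z = a; revert a; decide
  have : z - 1 ∈ RingHom.ker (PadicInt.toZMod (p := 2)) := by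
    simp [RingHom.mem_ker, map_sub, h1]
  rw [PadicInt.ker_toZMod, PadicInt.maximalIdeal_eq_span_p, Ideal.mem_span_singleton] at this
  exact_mod_cast this

lemma odd_q (y : ℚ_[2]) (h : ‖y‖ = 1) : ‖y - 1‖ ≤ (1/2:ℝ) := by
  have hy1 : ‖y‖ ≤ 1 := le_of_eq h
  set z : ℤ_[2] := ⟨y, hy1⟩ with hz
  have hlt : ‖z - 1‖ < 1 := odd_int z (by rw [PadicInt.norm_def]; simp [hz, h])
  have : ‖y - 1‖ < 1 := by
    have : ((z - 1 : ℤ_[2]) : ℚ_[2]) = y - 1 := by rw [PadicInt.coe_sub, PadicInt.coe_one]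
    rwa [PadicInt.norm_def, this] at hlt
  have := (Padic.norm_le_pow_iff_norm_lt_pow_add_one (y - 1) (-1)).mpr (by norm_num; exact_mod_cast this)
  calc ‖y - 1‖ ≤ (2:ℝ)^(-1:ℤ) := by exact_mod_cast this
    _ = 1/2 := by norm_num

lemma norm_two_q : ‖(2:ℚ_[2])‖ = (1/2:ℝ) := by
  have := Padic.norm_p (p := 2)
  norm_num at this ⊢
  exact_mod_cast this

lemma norm_int_le' (k : ℤ) (n : ℕ) (h : (2:ℤ)^n ∣ k) : ‖(k : ℚ_[2])‖ ≤ (1/2:ℝ)^n := by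
  have := (Padic.norm_int_le_pow_iff_dvd (p := 2) k n).mpr (by exact_mod_cast h)
  calc ‖(k:ℚ_[2])‖ ≤ ((2:ℕ):ℝ)^(-(n:ℤ)) := this
    _ = (1/2:ℝ)^n := by push_cast; rw [zpow_neg, zpow_natCast, one_div, inv_pow]

lemma norm_int_eq_one (k : ℤ) (h : ¬ (2:ℤ) ∣ k) : ‖(k : ℚ_[2])‖ = 1 := by
  refine le_antisymm (Padic.norm_int_le_one k) ?_
  by_contra hlt
  push_neg at hlt
  exact h (by exact_mod_cast (Padic.norm_intCast_lt_one_iff (p:=2) (k := k)).mp hlt)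

lemma f_maps_in (x : ℚ_[2]) (hx : ‖x - 2^2‖ ≤ (1/2:ℝ)^5) : ‖f x - 1‖ ≤ (1/2:ℝ)^3 := by
  set w := x - 2^2 with hw
  have key : f x - 1 = 80 + ((297/4) * w + ((45/2) * w^2 + (9/4) * w^3)) := by
    rw [hw]; unfold f; ring
  have hww : ‖w‖ ≤ (1/2:ℝ)^5 := hx
  have h80 : ‖(80:ℚ_[2])‖ ≤ (1/2:ℝ)^3 := by
    have := norm_int_le' 80 4 (by norm_num)
    calc ‖(80:ℚ_[2])‖ = ‖((80:ℤ):ℚ_[2])‖ := by norm_num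
      _ ≤ (1/2:ℝ)^4 := this
      _ ≤ (1/2:ℝ)^3 := by norm_num
  have h4 : ‖(4:ℚ_[2])‖ = (1/4:ℝ) := by
    have : (4:ℚ_[2]) = 2^2 := by norm_num
    rw [this, norm_pow, norm_two_q]; norm_num
  have h2 : ‖(2:ℚ_[2])‖ = (1/2:ℝ) := norm_two_q
  have h297 : ‖(297:ℚ_[2])‖ = 1 := by
    have := norm_int_eq_one 297 (by norm_num)
    calc ‖(297:ℚ_[2])‖ = ‖((297:ℤ):ℚ_[2])‖ := by norm_num
      _ = 1 := this
  have h45 : ‖(45:ℚ_[2])‖ ≤ 1 := by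
    calc ‖(45:ℚ_[2])‖ = ‖((45:ℤ):ℚ_[2])‖ := by norm_num
      _ ≤ 1 := Padic.norm_int_le_one 45
  have h9 : ‖(9:ℚ_[2])‖ ≤ 1 := by
    calc ‖(9:ℚ_[2])‖ = ‖((9:ℤ):ℚ_[2])‖ := by norm_num
      _ ≤ 1 := Padic.norm_int_le_one 9
  have hwnn : (0:ℝ) ≤ ‖w‖ := norm_nonneg _
  have t1 : ‖(297/4:ℚ_[2]) * w‖ ≤ (1/2:ℝ)^3 := by
    rw [norm_mul, norm_div, h297, h4]
    calc 1 / (1/4:ℝ) * ‖w‖ ≤ 4 * (1/2:ℝ)^5 := by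
          rw [show (1:ℝ)/(1/4) = 4 by norm_num]
          exact mul_le_mul_of_nonneg_left hww (by norm_num)
      _ ≤ (1/2:ℝ)^3 := by norm_num
  have t2 : ‖(45/2:ℚ_[2]) * w^2‖ ≤ (1/2:ℝ)^3 := by
    rw [norm_mul, norm_div, h2, norm_pow]
    have : ‖(45:ℚ_[2])‖ / (1/2:ℝ) ≤ 2 := by
      rw [div_le_iff₀ (by norm_num)]; linarith [h45]
    calc ‖(45:ℚ_[2])‖/(1/2:ℝ) * ‖w‖^2 ≤ 2 * ((1/2:ℝ)^5)^2 := by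
          apply mul_le_mul this (pow_le_pow_left₀ hwnn hww 2) (by positivity) (by norm_num)
      _ ≤ (1/2:ℝ)^3 := by norm_num
  have t3 : ‖(9/4:ℚ_[2]) * w^3‖ ≤ (1/2:ℝ)^3 := by
    rw [norm_mul, norm_div, h4, norm_pow]
    have : ‖(9:ℚ_[2])‖ / (1/4:ℝ) ≤ 4 := by
      rw [div_le_iff₀ (by norm_num)]; linarith [h9]
    calc ‖(9:ℚ_[2])‖/(1/4:ℝ) * ‖w‖^3 ≤ 4 * ((1/2:ℝ)^5)^3 := by
          apply mul_le_mul this (pow_le_pow_left₀ hwnn hww 3) (by positivity) (by norm_num)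
      _ ≤ (1/2:ℝ)^3 := by norm_num
  calc ‖f x - 1‖ = ‖(80:ℚ_[2]) + ((297/4) * w + ((45/2) * w^2 + (9/4) * w^3))‖ := by rw [key]
    _ ≤ max ‖(80:ℚ_[2])‖ ‖(297/4:ℚ_[2]) * w + ((45/2) * w^2 + (9/4) * w^3)‖ := Padic.nonarchimedean _ _
    _ ≤ (1/2:ℝ)^3 := by
        apply max_le h80
        calc ‖(297/4:ℚ_[2]) * w + ((45/2) * w^2 + (9/4) * w^3)‖
            ≤ max ‖(297/4:ℚ_[2]) * w‖ ‖(45/2:ℚ_[2]) * w^2 + (9/4) * w^3‖ := Padic.nonarchimedean _ _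
          _ ≤ (1/2:ℝ)^3 := by
              apply max_le t1
              calc ‖(45/2:ℚ_[2]) * w^2 + (9/4) * w^3‖ ≤ max ‖(45/2:ℚ_[2]) * w^2‖ ‖(9/4:ℚ_[2]) * w^3‖ := Padic.nonarchimedean _ _
                _ ≤ (1/2:ℝ)^3 := max_le t2 t3
lemma norm_int_eq_one_z (k : ℤ) (h : ¬ (2:ℤ) ∣ k) : ‖((k:ℤ_[2]))‖ = 1 := by
  refine le_antisymm (PadicInt.norm_le_one _) ?_
  by_contra hlt
  push_neg at hlt
  exact h ((PadicInt.norm_int_lt_one_iff_dvd k).mp hlt)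

lemma norm_int_lt_one_z (k : ℤ) (h : (2:ℤ) ∣ k) : ‖((k:ℤ_[2]))‖ < 1 :=
  (PadicInt.norm_int_lt_one_iff_dvd k).mpr h

lemma f_surj (y : ℚ_[2]) (hy : ‖y - 1‖ ≤ (1/2:ℝ)^3) :
    ∃ x : ℚ_[2], ‖x - 2^2‖ ≤ (1/2:ℝ)^5 ∧ f x = y := by
  -- the rescaled polynomial H(t) = ((81 - y)/8) + 297 t + 2880 t² + 9216 t³
  have h8 : ‖(8:ℚ_[2])‖ = (1/8:ℝ) := by
    have h2 : ‖(2:ℚ_[2])‖ = (1/2:ℝ) := by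
      have := Padic.norm_p (p := 2); norm_num at this ⊢; exact_mod_cast this
    have : (8:ℚ_[2]) = 2^3 := by norm_num
    rw [this, norm_pow, h2]; norm_num
  have h80 : ‖(80:ℚ_[2])‖ ≤ (1/2:ℝ)^3 := by
    have := (Padic.norm_int_le_pow_iff_dvd (p := 2) 80 4).mpr (by norm_num)
    calc ‖(80:ℚ_[2])‖ = ‖((80:ℤ):ℚ_[2])‖ := by norm_num
      _ ≤ ((2:ℕ):ℝ)^(-(4:ℕ):ℤ) := this
      _ ≤ (1/2:ℝ)^3 := by norm_num
  have hc0 : ‖(81 - y)/8‖ ≤ 1 := by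
    rw [norm_div, h8]
    have : ‖(81:ℚ_[2]) - y‖ ≤ (1/2:ℝ)^3 := by
      have : (81:ℚ_[2]) - y = 80 + -(y - 1) := by ring
      rw [this]
      refine le_trans (Padic.nonarchimedean _ _) (max_le h80 ?_)
      rwa [norm_neg]
    rw [div_le_one (by norm_num)]
    calc ‖(81:ℚ_[2]) - y‖ ≤ (1/2:ℝ)^3 := this
      _ = 1/8 := by norm_num
  set c : ℤ_[2] := ⟨(81 - y)/8, hc0⟩ with hcdef
  set F : Polynomial ℤ_[2] := C c + C 297 * X + C 2880 * X^2 + C 9216 * X^3 with hF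
  have heval : ∀ t : ℤ_[2], F.eval t = c + 297 * t + 2880 * t^2 + 9216 * t^3 := by
    intro t; rw [hF]; simp [eval_add, eval_mul, eval_pow]
  have hdeval : ∀ t : ℤ_[2], F.derivative.eval t = 297 + 5760 * t + 27648 * t^2 := by
    intro t; rw [hF]
    simp [derivative_add, derivative_mul, derivative_C, derivative_X, derivative_X_pow,
      eval_add, eval_mul, eval_pow]
    ring
  -- choose starting point
  have hstart : ∃ a : ℤ_[2], ‖F.eval a‖ < ‖F.derivative.eval a‖ ^ 2 := by
    by_cases hc : ‖c‖ < 1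
    · refine ⟨0, ?_⟩
      rw [heval, hdeval]
      have : ‖(297:ℤ_[2])‖ = 1 := by
        have := norm_int_eq_one_z 297 (by norm_num); exact_mod_cast this
      simp only [mul_zero, add_zero, zero_pow, mul_zero]
      norm_num [this]
      exact hc
    · refine ⟨1, ?_⟩
      rw [heval, hdeval]
      have hd : ‖(297:ℤ_[2]) + 5760 * 1 + 27648 * 1^2‖ = 1 := by
        norm_num
        have := norm_int_eq_one_z 33705 (by norm_num); exact_mod_cast this
      rw [hd]
      have hcase : c + 297 * 1 + 2880 * 1^2 + 9216 * 1^3 = (c - 1) + 12394 := by ring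
      rw [hcase]
      have h1 : ‖c - 1‖ < 1 := odd_int c hc
      have h2 : ‖(12394:ℤ_[2])‖ < 1 := by
        have := norm_int_lt_one_z 12394 (by norm_num); exact_mod_cast this
      calc ‖(c - 1) + 12394‖ ≤ max ‖c - 1‖ ‖(12394:ℤ_[2])‖ := PadicInt.nonarchimedean _ _
        _ < 1^2 := by rw [one_pow]; exact max_lt h1 h2
  obtain ⟨a, ha⟩ := hstart
  obtain ⟨z, hz0, -, -, -⟩ := hensels_lemma ha
  refine ⟨4 + 32 * (z : ℚ_[2]), ?_, ?_⟩
  · have : (4:ℚ_[2]) + 32 * z - 2^2 = 2^5 * z := by ring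
    rw [this, norm_mul]
    have h2 : ‖(2:ℚ_[2])‖ = (1/2:ℝ) := by
      have := Padic.norm_p (p := 2); norm_num at this ⊢; exact_mod_cast this
    rw [norm_pow, h2]
    calc (1/2:ℝ)^5 * ‖(z:ℚ_[2])‖ ≤ (1/2:ℝ)^5 * 1 := by
          apply mul_le_mul_of_nonneg_left _ (by norm_num)
          exact_mod_cast z.2
      _ = (1/2:ℝ)^5 := by ring
  · have hz0' : c + 297 * z + 2880 * z^2 + 9216 * z^3 = 0 := by rw [← heval]; exact hz0
    have hcast : ((c:ℚ_[2]) + 297 * (z:ℚ_[2]) + 2880 * (z:ℚ_[2])^2 + 9216 * (z:ℚ_[2])^3) = 0 := by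
      exact_mod_cast congrArg (fun w : ℤ_[2] => (w : ℚ_[2])) hz0'
    have hcc : (c : ℚ_[2]) = (81 - y)/8 := rfl
    rw [hcc] at hcast
    have : f (4 + 32 * (z:ℚ_[2])) - y = 8 * ((81 - y)/8 + 297 * (z:ℚ_[2]) + 2880 * (z:ℚ_[2])^2 + 9216 * (z:ℚ_[2])^3) := by
      unfold f; ring
    have hfinal : f (4 + 32 * (z:ℚ_[2])) - y = 0 := by rw [this, hcast, mul_zero]
    exact sub_eq_zero.mp hfinal
lemma norm_two_pow_q (k : ℕ) : ‖(2:ℚ_[2])^k‖ = (1/2:ℝ)^k := by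
  rw [norm_pow, norm_two_q]


lemma ball_decomp :
    {x : ℚ_[2] | ‖x - 1‖ ≤ (1 / 2 : ℝ) ^ 3} =
      ({1} : Set ℚ_[2]) ∪
        ⋃ (m : ℕ) (_ : 2 ≤ m),
          ({x : ℚ_[2] | ‖x - (1 + 2 ^ (m + 1))‖ ≤ (1 / 2 : ℝ) ^ (m + 3)} ∪
            {x : ℚ_[2] | ‖x - (1 + 2 ^ (m + 1) + 2 ^ (m + 2))‖ ≤ (1 / 2 : ℝ) ^ (m + 3)}) := by
  have hhalf : ∀ k : ℕ, ((1/2:ℝ))^k = (2:ℝ)^(-(k:ℤ)) := by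
    intro k; rw [zpow_neg, zpow_natCast, one_div, inv_pow]
  ext x
  simp only [mem_setOf_eq, mem_union, mem_singleton_iff, mem_iUnion]
  constructor
  · intro hx
    by_cases hx1 : x = 1
    · exact Or.inl hx1
    · right
      set d := x - 1 with hd
      have hd0 : d ≠ 0 := sub_ne_zero.mpr hx1
      have hnorm : ‖d‖ = (2:ℝ)^(-d.valuation) := by
        have := Padic.norm_eq_zpow_neg_valuation hd0
        rw [this]; norm_num
      have hv3 : 3 ≤ d.valuation := by
        have h1 : (2:ℝ)^(-d.valuation) ≤ (2:ℝ)^(-(3:ℤ)) := by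
          rw [← hnorm]
          calc ‖d‖ ≤ (1/2:ℝ)^3 := hx
            _ = (2:ℝ)^(-((3:ℕ):ℤ)) := hhalf 3
            _ = (2:ℝ)^(-(3:ℤ)) := by norm_num
        have := (zpow_le_zpow_iff_right₀ (by norm_num : (1:ℝ) < 2)).mp h1
        omega
      set m : ℕ := (d.valuation - 1).toNat with hm
      have hmv : (m:ℤ) + 1 = d.valuation := by
        rw [hm]; omega
      have hm2 : 2 ≤ m := by omega
      refine ⟨m, hm2, ?_⟩
      have hp0 : (2:ℚ_[2])^(m+1) ≠ 0 := pow_ne_zero _ two_ne_zero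
      set u := d / 2^(m+1) with hu
      have hdu : d = 2^(m+1) * u := by
        rw [hu]; field_simp
      have hun : ‖u‖ = 1 := by
        rw [hu, norm_div, norm_two_pow_q, hnorm, hhalf, ← hmv]
        rw [div_eq_one_iff_eq]
        · norm_num
        · positivity
      have hu1 : ‖u - 1‖ ≤ (1/2:ℝ) := odd_q u hun
      by_cases hcase : ‖u - 1‖ ≤ (1/2:ℝ)^2
      · left
        have hxeq : x - (1 + 2^(m+1)) = 2^(m+1) * (u - 1) := by
          have : x - (1 + 2^(m+1)) = d - 2^(m+1) := by rw [hd]; ring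
          rw [this, hdu]; ring
        rw [hxeq, norm_mul, norm_two_pow_q]
        calc (1/2:ℝ)^(m+1) * ‖u - 1‖ ≤ (1/2:ℝ)^(m+1) * (1/2)^2 := by
              apply mul_le_mul_of_nonneg_left hcase (by positivity)
          _ = (1/2:ℝ)^(m+3) := by ring
      · right
        have hu12 : ‖u - 1‖ = (1/2:ℝ) := by
          refine le_antisymm hu1 ?_
          by_contra hlt
          push_neg at hlt
          apply hcase
          have : ‖u - 1‖ < (2:ℝ)^(-(1:ℤ)) := by
            calc ‖u - 1‖ < 1/2 := hlt
              _ = (2:ℝ)^(-(1:ℤ)) := by norm_num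
          have := (Padic.norm_le_pow_iff_norm_lt_pow_add_one (u-1) (-2)).mpr (by norm_num at this ⊢; exact this)
          calc ‖u - 1‖ ≤ ((2:ℕ):ℝ)^(-(2:ℤ)) := by exact_mod_cast this
            _ = (1/2:ℝ)^2 := by norm_num
        set w := (u - 1)/2 with hw
        have hwn : ‖w‖ = 1 := by
          rw [hw, norm_div, norm_two_q, hu12]; norm_num
        have hw1 : ‖w - 1‖ ≤ (1/2:ℝ) := odd_q w hwn
        have hu3 : u - 3 = 2 * (w - 1) := by rw [hw]; field_simp; ring
        have hu3n : ‖u - 3‖ ≤ (1/2:ℝ)^2 := by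
          rw [hu3, norm_mul, norm_two_q]
          calc (1/2:ℝ) * ‖w - 1‖ ≤ (1/2:ℝ) * (1/2) := by
                apply mul_le_mul_of_nonneg_left hw1 (by norm_num)
            _ = (1/2:ℝ)^2 := by ring
        have hxeq : x - (1 + 2^(m+1) + 2^(m+2)) = 2^(m+1) * (u - 3) := by
          have : x - (1 + 2^(m+1) + 2^(m+2)) = d - 2^(m+1) - 2^(m+2) := by rw [hd]; ring
          rw [this, hdu]; ring
        rw [hxeq, norm_mul, norm_two_pow_q]
        calc (1/2:ℝ)^(m+1) * ‖u - 3‖ ≤ (1/2:ℝ)^(m+1) * (1/2)^2 := by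
              apply mul_le_mul_of_nonneg_left hu3n (by positivity)
          _ = (1/2:ℝ)^(m+3) := by ring
  · rintro (rfl | ⟨m, hm, hx⟩)
    · simp
    · have hkey : ∀ k : ℕ, 3 ≤ k → ‖(2:ℚ_[2])^k‖ ≤ (1/2:ℝ)^3 := by
        intro k hk
        rw [norm_two_pow_q]
        exact pow_le_pow_of_le_one (by norm_num) (by norm_num) hk
      have hm3 : (1/2:ℝ)^(m+3) ≤ (1/2:ℝ)^3 := pow_le_pow_of_le_one (by norm_num) (by norm_num) (by omega)
      rcases hx with hx | hx
      · have : x - 1 = (x - (1 + 2^(m+1))) + 2^(m+1) := by ring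
        rw [this]
        refine le_trans (Padic.nonarchimedean _ _) (max_le ?_ ?_)
        · exact le_trans hx hm3
        · exact hkey (m+1) (by omega)
      · have : x - 1 = (x - (1 + 2^(m+1) + 2^(m+2))) + (2^(m+1) + 2^(m+2)) := by ring
        rw [this]
        refine le_trans (Padic.nonarchimedean _ _) (max_le ?_ ?_)
        · exact le_trans hx hm3
        · refine le_trans (Padic.nonarchimedean _ _) (max_le ?_ ?_)
          · exact hkey (m+1) (by omega)
          · exact hkey (m+2) (by omega)

/-- `f(2² + 2⁵ℤ₂) = 1 + 2³ℤ₂`, and this image decomposes as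
`{1} ∪ ⋃_{m≥2} [(1 + 2^{m+1} + 2^{m+3}ℤ₂) ∪ (1 + 2^{m+1} + 2^{m+2} + 2^{m+3}ℤ₂)]`. -/
theorem stmt7 :
    (f '' {x : ℚ_[2] | ‖x - 2 ^ 2‖ ≤ (1 / 2 : ℝ) ^ 5} =
        {x : ℚ_[2] | ‖x - 1‖ ≤ (1 / 2 : ℝ) ^ 3}) ∧
    (f '' {x : ℚ_[2] | ‖x - 2 ^ 2‖ ≤ (1 / 2 : ℝ) ^ 5} =
        ({1} : Set ℚ_[2]) ∪
          ⋃ (m : ℕ) (_ : 2 ≤ m),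
            ({x : ℚ_[2] | ‖x - (1 + 2 ^ (m + 1))‖ ≤ (1 / 2 : ℝ) ^ (m + 3)} ∪
              {x : ℚ_[2] | ‖x - (1 + 2 ^ (m + 1) + 2 ^ (m + 2))‖ ≤ (1 / 2 : ℝ) ^ (m + 3)})) := by
  have first : f '' {x : ℚ_[2] | ‖x - 2 ^ 2‖ ≤ (1 / 2 : ℝ) ^ 5} =
      {x : ℚ_[2] | ‖x - 1‖ ≤ (1 / 2 : ℝ) ^ 3} := by
    ext y
    constructor
    · rintro ⟨x, hx, rfl⟩
      exact f_maps_in x hx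
    · intro hy
      obtain ⟨x, hx, hfx⟩ := f_surj y hy
      exact ⟨x, hx, hfx⟩
  exact ⟨first, first.trans ball_decomp⟩
end
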